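/- arXiv:2106.11225 — 5 statements merged into one kernel-verified Lean document; each statement's English description precedes it below -/
import Mathlib

section
/- Let V be a unitarizable highest weight representation of the Virasoro algebra with highest weight λ and highest weight vector v (so L_k.v = 0 for k ≥ 1, L_0.v = λ(L_0)v, c.v = λ(c)v, and the Hermitian form satisfies ⟨L_k w | w'⟩ = ⟨w | L_{-k} w'⟩ and is positive definite). Then both λ(L_0) ≥ 0 and λ(c) ≥ 0. -/
/-- A unitarizable representation of the Virasoro algebra on a complex inner product
space `V` (the positive-definite Hermitian form is the inner product): operators
`L k` (`k ∈ ℤ`) and a central operator `C` satisfying the Virasoro commutation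
relations `[L k, L j] = (k - j) L (k+j) + (1/12)(k³ - k) δ_{k,-j} C`, with the
adjunction properties `⟨L k w, w'⟩ = ⟨w, L (-k) w'⟩` and `⟨C w, w'⟩ = ⟨w, C w'⟩`. -/
structure VirasoroRep (V : Type) [NormedAddCommGroup V] [InnerProductSpace ℂ V] where
  L : ℤ → V →ₗ[ℂ] V
  C : V →ₗ[ℂ] V
  comm : ∀ k j : ℤ, (L k).comp (L j) - (L j).comp (L k)
      = ((k : ℂ) - (j : ℂ)) • L (k + j)
        + (if k + j = 0 then (((k : ℂ) ^ 3 - (k : ℂ)) / 12) else 0) • C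
  central : ∀ k : ℤ, (L k).comp C = C.comp (L k)
  unitary : ∀ (k : ℤ) (w w' : V), (inner ℂ (L k w) w' : ℂ) = inner ℂ w (L (-k) w')
  unitaryC : ∀ w w' : V, (inner ℂ (C w) w' : ℂ) = inner ℂ w (C w')

/-!
For `n ≥ 1` the relation `[L n, L (-n)] = 2n L 0 + (n³ - n)/12 C` applied to the highest weight
vector `v` gives `L n (L (-n) v) = (2n λ(L_0) + (n³ - n)/12 λ(c)) v`, so by unitarity
`‖L (-n) v‖² = (2n λ(L_0) + (n³ - n)/12 λ(c)) ‖v‖²` and these coefficients are nonnegative reals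
(nonnegativity in `ℂ` is taken in `ComplexOrder`). The case `n = 1` gives `λ(L_0) ≥ 0`; dividing
by `n³` and letting `n → ∞` gives `λ(c) ≥ 0`.
-/

open ComplexOrder Filter Topology

noncomputable def virasoroNormCoeff (k : ℤ) (h c : ℂ) : ℂ := 2 * k * h + ((k : ℂ) ^ 3 - k) / 12 * c

namespace VirasoroRep

variable {V : Type} [NormedAddCommGroup V] [InnerProductSpace ℂ V] (ρ : VirasoroRep V)

lemma L_apply_L_neg_of_eigen {v : V} {k : ℤ} {h c : ℂ} (hk : ρ.L k v = 0)
    (h0 : ρ.L 0 v = h • v) (hc : ρ.C v = c • v) :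
    ρ.L k (ρ.L (-k) v) = virasoroNormCoeff k h c • v := by
  have hcomm := LinearMap.congr_fun (ρ.comm k (-k)) v
  simp only [LinearMap.sub_apply, LinearMap.comp_apply, LinearMap.add_apply,
    LinearMap.smul_apply, add_neg_cancel, hk, map_zero, sub_zero, h0, hc,
    smul_smul] at hcomm
  rw [hcomm, ← add_smul, virasoroNormCoeff]
  congr 1
  push_cast
  ring

lemma inner_L_neg_self (k : ℤ) (w : V) :
    inner ℂ (ρ.L (-k) w) (ρ.L (-k) w) = inner ℂ w (ρ.L k (ρ.L (-k) w)) := by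
  rw [ρ.unitary, neg_neg]

lemma virasoroNormCoeff_nonneg {v : V} (hv : v ≠ 0) {k : ℤ} {h c : ℂ} (hk : ρ.L k v = 0)
    (h0 : ρ.L 0 v = h • v) (hc : ρ.C v = c • v) :
    0 ≤ virasoroNormCoeff k h c := by
  have hnorm : inner ℂ (ρ.L (-k) v) (ρ.L (-k) v) = virasoroNormCoeff k h c * inner ℂ v v := by
    rw [inner_L_neg_self, ρ.L_apply_L_neg_of_eigen hk h0 hc, inner_smul_right]
  have hv' : inner ℂ v v ≠ 0 := inner_self_ne_zero.mpr hv
  rw [← div_eq_of_eq_mul hv' hnorm, inner_self_eq_norm_sq_to_K, inner_self_eq_norm_sq_to_K]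
  positivity

end VirasoroRep

lemma tendsto_twelve_mul_virasoroNormCoeff_div_cube (h c : ℂ) :
    Tendsto (fun n : ℕ => 12 * virasoroNormCoeff n h c / (n : ℂ) ^ 3) atTop (𝓝 c) := by
  have hlim := ((tendsto_one_div_atTop_nhds_zero_nat (𝕜 := ℂ)).pow 2).const_mul
    (24 * h - c) |>.const_add c
  rw [zero_pow two_ne_zero, mul_zero, add_zero] at hlim
  refine hlim.congr' ((eventually_ne_atTop 0).mono fun n hn => ?_)
  have hn' : (n : ℂ) ≠ 0 := Nat.cast_ne_zero.mpr hn
  simp only [virasoroNormCoeff, Int.cast_natCast]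
  field_simp
  ring

/-- If `v` is a highest weight vector of a unitarizable highest weight
representation of the Virasoro algebra, with `L 0 v = λ(L_0) v` and `C v = λ(c) v`,
then both `λ(L_0) ≥ 0` and `λ(c) ≥ 0` (they are nonnegative real numbers). -/
theorem virasoro_unitarizable_hw_nonneg
    {V : Type} [NormedAddCommGroup V] [InnerProductSpace ℂ V]
    (ρ : VirasoroRep V) (v : V) (hv : v ≠ 0) (lam0 lamc : ℂ)
    (hann : ∀ k : ℤ, 1 ≤ k → ρ.L k v = 0)
    (h0 : ρ.L 0 v = lam0 • v) (hc : ρ.C v = lamc • v) :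
    (0 ≤ lam0.re ∧ lam0.im = 0) ∧ (0 ≤ lamc.re ∧ lamc.im = 0) := by
  have hcoeff (n : ℕ) (hn : 1 ≤ n) : 0 ≤ virasoroNormCoeff n lam0 lamc :=
    ρ.virasoroNormCoeff_nonneg hv (hann n (by exact_mod_cast hn)) h0 hc
  have hlam0 : 0 ≤ lam0 := by
    have h1 := hcoeff 1 le_rfl
    norm_num [virasoroNormCoeff] at h1
    simpa using mul_nonneg (by positivity : (0 : ℂ) ≤ 2⁻¹) h1
  have hlamc : 0 ≤ lamc :=
    ge_of_tendsto (tendsto_twelve_mul_virasoroNormCoeff_div_cube lam0 lamc)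
      ((eventually_ge_atTop 1).mono fun n hn =>
        div_nonneg (mul_nonneg (by norm_num) (hcoeff n hn)) (by positivity))
  obtain ⟨hlam0_re, hlam0_im⟩ := Complex.nonneg_iff.mp hlam0
  obtain ⟨hlamc_re, hlamc_im⟩ := Complex.nonneg_iff.mp hlamc
  exact ⟨⟨hlam0_re, hlam0_im.symm⟩, hlamc_re, hlamc_im.symm⟩
end

section
/- Let V be an irreducible unitarizable highest weight representation of the Virasoro algebra with highest weight λ and highest weight vector v. (1) If λ(L_0) ≠ 0 then L_{−k}·v ≠ 0 for every k ≥ 1. (2) If λ(L_0) = 0 and λ(c) ≠ 0 then L_{−1}·v = 0 but L_{−k}·v ≠ 0 for all k ≥ 2. (3) If λ(L_0) = λ(c) = 0 then V is one-dimensional. -/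
/-!
For a highest weight vector `v` of weight `(h, c)` and `k ≥ 1`, unitarity and the commutation
relation give `‖L₋ₖ v‖² = ⟪v, [Lₖ, L₋ₖ] v⟫ = (2kh + (k³ - k)c/12) ‖v‖²`. Taking `k = 1, 2` shows
that `h` and `c` are real, and the coefficient must be nonnegative for every `k ≥ 1`. This
positivity forces `h > 0` when `h ≠ 0`, and then a vanishing coefficient at some `k` would force
`c < 0` and make the coefficient at `k + 1` negative; when `h = 0` it forces `c > 0`. When
`h = c = 0` every `Lₖ` kills `v`, so `ℂ v` is a subrepresentation, hence all of `V`.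
-/

namespace VirasoroRep

/-- The eigenvalue of `[L k, L (-k)]` on a highest weight vector of weight `(h, c)`. -/
def normSqCoeff {R : Type*} [Field R] (h c : R) (k : ℤ) : R :=
  2 * k * h + ((k : R) ^ 3 - k) / 12 * c

section Coefficient

@[simp, norm_cast]
theorem normSqCoeff_ofReal (h c : ℝ) (k : ℤ) :
    normSqCoeff (h : ℂ) c k = ((normSqCoeff h c k : ℝ) : ℂ) := by
  simp [normSqCoeff]

variable {R : Type*} [Field R]

theorem normSqCoeff_one (h c : R) : normSqCoeff h c 1 = 2 * h := by
  simp [normSqCoeff]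

theorem normSqCoeff_two [CharZero R] (h c : R) : normSqCoeff h c 2 = 4 * h + c / 2 := by
  simp only [normSqCoeff, Int.cast_ofNat]
  ring

theorem normSqCoeff_zero_zero (k : ℤ) : normSqCoeff (0 : R) 0 k = 0 := by
  simp [normSqCoeff]

theorem normSqCoeff_pos_of_pos {h c : ℝ} (hh : 0 < h)
    (hnonneg : ∀ k : ℤ, 1 ≤ k → 0 ≤ normSqCoeff h c k) {k : ℤ} (hk : 1 ≤ k) :
    0 < normSqCoeff h c k := by
  by_contra! hle
  have hk' : (1 : ℝ) ≤ k := by exact_mod_cast hk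
  have hnext := hnonneg (k + 1) (by omega)
  simp only [normSqCoeff, Int.cast_add, Int.cast_one] at hle hnext
  have hc : ((k : ℝ) ^ 2 - 1) * c ≤ -24 * h := by nlinarith
  have hc_neg : c < 0 := by nlinarith
  have hc' : ((k : ℝ) ^ 2 + 2 * k) * c < -24 * h := by nlinarith
  nlinarith

theorem normSqCoeff_zero_left_pos {c : ℝ} (hc : 0 < c) {k : ℤ} (hk : 2 ≤ k) :
    0 < normSqCoeff 0 c k := by
  have hk' : (2 : ℝ) ≤ k := by exact_mod_cast hk
  have hcube : 0 < (k : ℝ) ^ 3 - k := by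
    have : 0 < (k : ℝ) * ((k - 1) * (k + 1)) :=
      mul_pos (by linarith) (mul_pos (by linarith) (by linarith))
    linear_combination this
  simp only [normSqCoeff, mul_zero, zero_add]
  positivity

end Coefficient

variable {V : Type} [NormedAddCommGroup V] [InnerProductSpace ℂ V] (ρ : VirasoroRep V)

def IsIrreducible : Prop :=
  ∀ p : Submodule ℂ V,
    (∀ (k : ℤ), ∀ x ∈ p, ρ.L k x ∈ p) → (∀ x ∈ p, ρ.C x ∈ p) → p = ⊥ ∨ p = ⊤

structure IsHighestWeight (v : V) (h c : ℂ) : Prop where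
  L_pos_apply : ∀ k : ℤ, 1 ≤ k → ρ.L k v = 0
  L_zero_apply : ρ.L 0 v = h • v
  C_apply : ρ.C v = c • v

variable {ρ}

theorem finrank_eq_one_of_mem_span {v : V} (hv : v ≠ 0) (hL : ∀ k, ρ.L k v ∈ ℂ ∙ v)
    (hC : ρ.C v ∈ ℂ ∙ v) (hirr : ρ.IsIrreducible) : Module.finrank ℂ V = 1 := by
  have hinv : ∀ f : V →ₗ[ℂ] V, f v ∈ ℂ ∙ v → ∀ x ∈ ℂ ∙ v, f x ∈ ℂ ∙ v := by
    intro f hf x hx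
    obtain ⟨a, rfl⟩ := Submodule.mem_span_singleton.mp hx
    rw [map_smul]
    exact Submodule.smul_mem _ a hf
  rcases hirr (ℂ ∙ v) (fun k => hinv _ (hL k)) (hinv _ hC) with h | h
  · exact absurd h ((Submodule.span_singleton_eq_bot).not.mpr hv)
  · rw [← finrank_top ℂ V, ← h, finrank_span_singleton hv]

namespace IsHighestWeight

variable {v : V}

section Complex

variable {h c : ℂ} (hw : ρ.IsHighestWeight v h c)
include hw

theorem L_comp_L_neg_apply {k : ℤ} (hk : 1 ≤ k) :
    ρ.L k (ρ.L (-k) v) = normSqCoeff h c k • v := by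
  have hcomm := LinearMap.congr_fun (ρ.comm k (-k)) v
  simp only [LinearMap.sub_apply, LinearMap.comp_apply, LinearMap.add_apply,
    LinearMap.smul_apply, add_neg_cancel, if_pos, hw.L_zero_apply, hw.C_apply,
    hw.L_pos_apply k hk, map_zero, sub_zero, Int.cast_neg, sub_neg_eq_add] at hcomm
  rw [hcomm, normSqCoeff, smul_smul, smul_smul, ← add_smul]
  congr 1
  ring

theorem inner_L_neg_self {k : ℤ} (hk : 1 ≤ k) :
    inner ℂ (ρ.L (-k) v) (ρ.L (-k) v) = normSqCoeff h c k * inner ℂ v v := by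
  rw [ρ.unitary, neg_neg, hw.L_comp_L_neg_apply hk, inner_smul_right]

theorem ofReal_norm_L_neg_sq {k : ℤ} (hk : 1 ≤ k) :
    ((‖ρ.L (-k) v‖ ^ 2 : ℝ) : ℂ) = normSqCoeff h c k * (‖v‖ ^ 2 : ℝ) := by
  have := hw.inner_L_neg_self hk
  rw [inner_self_eq_norm_sq_to_K, inner_self_eq_norm_sq_to_K] at this
  exact_mod_cast this

theorem exists_normSqCoeff_eq_ofReal (hv : v ≠ 0) {k : ℤ} (hk : 1 ≤ k) :
    ∃ r : ℝ, normSqCoeff h c k = r := by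
  have hvv : ((‖v‖ ^ 2 : ℝ) : ℂ) ≠ 0 := by simpa using hv
  refine ⟨‖ρ.L (-k) v‖ ^ 2 / ‖v‖ ^ 2, ?_⟩
  rw [Complex.ofReal_div, eq_div_iff hvv, hw.ofReal_norm_L_neg_sq hk]

theorem exists_real (hv : v ≠ 0) : ∃ a b : ℝ, h = a ∧ c = b := by
  obtain ⟨r₁, hr₁⟩ := hw.exists_normSqCoeff_eq_ofReal hv le_rfl
  obtain ⟨r₂, hr₂⟩ := hw.exists_normSqCoeff_eq_ofReal hv one_le_two
  rw [normSqCoeff_one] at hr₁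
  rw [normSqCoeff_two] at hr₂
  refine ⟨r₁ / 2, 2 * r₂ - 4 * r₁, ?_, ?_⟩ <;> push_cast
  · linear_combination hr₁ / 2
  · linear_combination 2 * hr₂ - 4 * hr₁

theorem L_neg_eq_zero_of_normSqCoeff_eq_zero {k : ℤ} (hk : 1 ≤ k)
    (hzero : normSqCoeff h c k = 0) : ρ.L (-k) v = 0 := by
  rw [← inner_self_eq_zero (𝕜 := ℂ), hw.inner_L_neg_self hk, hzero, zero_mul]

theorem L_neg_one_eq_zero (hh : h = 0) : ρ.L (-1) v = 0 :=
  hw.L_neg_eq_zero_of_normSqCoeff_eq_zero le_rfl (by simp [normSqCoeff, hh])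

end Complex

section Real

variable {h c : ℝ} (hw : ρ.IsHighestWeight v h c)
include hw

theorem norm_L_neg_sq {k : ℤ} (hk : 1 ≤ k) :
    ‖ρ.L (-k) v‖ ^ 2 = normSqCoeff h c k * ‖v‖ ^ 2 := by
  exact_mod_cast hw.ofReal_norm_L_neg_sq hk

theorem normSqCoeff_nonneg (hv : v ≠ 0) {k : ℤ} (hk : 1 ≤ k) : 0 ≤ normSqCoeff h c k := by
  have hpos : 0 < ‖v‖ ^ 2 := by positivity
  have := hw.norm_L_neg_sq hk
  nlinarith [sq_nonneg ‖ρ.L (-k) v‖]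

theorem L_neg_eq_zero_iff (hv : v ≠ 0) {k : ℤ} (hk : 1 ≤ k) :
    ρ.L (-k) v = 0 ↔ normSqCoeff h c k = 0 := by
  rw [← norm_eq_zero, ← sq_eq_zero_iff, hw.norm_L_neg_sq hk,
    mul_eq_zero, or_iff_left (by positivity)]

theorem L_neg_ne_zero_of_ne_zero (hv : v ≠ 0) (hh : h ≠ 0) {k : ℤ} (hk : 1 ≤ k) :
    ρ.L (-k) v ≠ 0 := by
  have hh_pos : 0 < h := by
    have := hw.normSqCoeff_nonneg hv le_rfl
    rw [normSqCoeff_one] at this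
    exact lt_of_le_of_ne (by linarith) (Ne.symm hh)
  rw [ne_eq, hw.L_neg_eq_zero_iff hv hk]
  exact (normSqCoeff_pos_of_pos hh_pos (fun _ => hw.normSqCoeff_nonneg hv) hk).ne'

theorem L_neg_ne_zero_of_eq_zero (hv : v ≠ 0) (hh : h = 0) (hc : c ≠ 0) {k : ℤ} (hk : 2 ≤ k) :
    ρ.L (-k) v ≠ 0 := by
  subst hh
  have hc_pos : 0 < c := by
    have := hw.normSqCoeff_nonneg hv one_le_two
    rw [normSqCoeff_two] at this
    exact lt_of_le_of_ne (by linarith) (Ne.symm hc)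
  rw [ne_eq, hw.L_neg_eq_zero_iff hv (by omega)]
  exact (normSqCoeff_zero_left_pos hc_pos hk).ne'

theorem finrank_eq_one (hv : v ≠ 0) (hh : h = 0) (hc : c = 0) (hirr : ρ.IsIrreducible) :
    Module.finrank ℂ V = 1 := by
  subst hh hc
  have hL : ∀ k, ρ.L k v = 0 := by
    intro k
    rcases lt_trichotomy k 0 with hk | rfl | hk
    · simpa using hw.L_neg_eq_zero_of_normSqCoeff_eq_zero (k := -k) (by omega)
        (normSqCoeff_zero_zero _)
    · simp [hw.L_zero_apply]
    · exact hw.L_pos_apply k hk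
  refine finrank_eq_one_of_mem_span hv (fun k => ?_) ?_ hirr
  · simp [hL k]
  · simp [hw.C_apply]

end Real

end IsHighestWeight

end VirasoroRep

/-- Let `V` be an irreducible unitarizable highest weight representation
of the Virasoro algebra with highest weight `λ` (so `L 0 v = λ(L_0) v`, `C v = λ(c) v`,
`L k v = 0` for `k ≥ 1`, and the only invariant subspaces are `⊥` and `⊤`).
(1) If `λ(L_0) ≠ 0` then `L (-k) v ≠ 0` for every `k ≥ 1`.
(2) If `λ(L_0) = 0` and `λ(c) ≠ 0` then `L (-1) v = 0` but `L (-k) v ≠ 0` for all `k ≥ 2`.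
(3) If `λ(L_0) = λ(c) = 0` then `V` is one-dimensional. -/
theorem virasoro_irreducible_hw_structure
    {V : Type} [NormedAddCommGroup V] [InnerProductSpace ℂ V]
    (ρ : VirasoroRep V) (v : V) (hv : v ≠ 0) (lam0 lamc : ℂ)
    (hann : ∀ k : ℤ, 1 ≤ k → ρ.L k v = 0)
    (h0 : ρ.L 0 v = lam0 • v) (hc : ρ.C v = lamc • v)
    (hirr : ∀ p : Submodule ℂ V,
      (∀ (k : ℤ), ∀ x ∈ p, ρ.L k x ∈ p) → (∀ x ∈ p, ρ.C x ∈ p) → p = ⊥ ∨ p = ⊤) :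
    (lam0 ≠ 0 → ∀ k : ℤ, 1 ≤ k → ρ.L (-k) v ≠ 0) ∧
    (lam0 = 0 → lamc ≠ 0 → ρ.L (-1) v = 0 ∧ ∀ k : ℤ, 2 ≤ k → ρ.L (-k) v ≠ 0) ∧
    (lam0 = 0 → lamc = 0 → Module.finrank ℂ V = 1) := by
  have hw : ρ.IsHighestWeight v lam0 lamc := ⟨hann, h0, hc⟩
  obtain ⟨h, c, rfl, rfl⟩ := hw.exists_real hv
  simp only [ne_eq, Complex.ofReal_eq_zero]
  refine ⟨fun hh _ => hw.L_neg_ne_zero_of_ne_zero hv hh, fun hh hc0 => ⟨?_, fun _ => ?_⟩,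
    fun hh hc0 => hw.finrank_eq_one hv hh hc0 hirr⟩
  · exact hw.L_neg_one_eq_zero (Complex.ofReal_eq_zero.mpr hh)
  · exact hw.L_neg_ne_zero_of_eq_zero hv hh hc0
end

section
/- Let 𝔤 be an affine Kac–Moody algebra, and let β = γ + kδ be a real positive root (γ a root of the underlying finite root system, k ≥ 0). Suppose β − 2α_i is a root for some simple root α_i of 𝔤. Then for any j ≠ i, neither β − 2α_j nor β − 2α_j − α_i is a root or zero. -/
/-- A finite reduced crystallographic (irreducible) root system in a rational vector
space `V`, given by a symmetric positive form `B` on the roots. -/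
structure FinRootSystem (V : Type) [AddCommGroup V] [Module ℚ V] where
  B : V →ₗ[ℚ] V →ₗ[ℚ] ℚ
  symm : ∀ x y, B x y = B y x
  roots : Set V
  finite : roots.Finite
  zero_not_mem : (0 : V) ∉ roots
  pos : ∀ a ∈ roots, 0 < B a a
  neg_mem : ∀ a ∈ roots, -a ∈ roots
  reflect_mem : ∀ a ∈ roots, ∀ b ∈ roots, b - (2 * B b a / B a a) • a ∈ roots
  crys : ∀ a ∈ roots, ∀ b ∈ roots, ∃ n : ℤ, 2 * B b a / B a a = (n : ℚ)
  reduced : ∀ a ∈ roots, ∀ c : ℚ, c • a ∈ roots → c = 1 ∨ c = -1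
  irred : ¬ ∃ S T : Set V, S.Nonempty ∧ T.Nonempty ∧ S ∪ T = roots ∧
      ∀ a ∈ S, ∀ b ∈ T, B a b = 0

/-- A base (system of simple roots) of the finite root system, together with the
highest root `θ`. -/
structure RSBase {V : Type} [AddCommGroup V] [Module ℚ V]
    (R : FinRootSystem V) (ℓ : ℕ) where
  a : Fin ℓ → V
  mem : ∀ i, a i ∈ R.roots
  indep : LinearIndependent ℚ a
  decomp : ∀ γ ∈ R.roots, (∃ c : Fin ℓ → ℕ, γ = ∑ i, (c i : ℚ) • a i) ∨
      (∃ c : Fin ℓ → ℕ, γ = -(∑ i, (c i : ℚ) • a i))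
  θ : V
  θ_mem : θ ∈ R.roots
  θ_highest : ∀ γ ∈ R.roots, ∃ c : Fin ℓ → ℕ, θ - γ = ∑ i, (c i : ℚ) • a i

variable {V : Type} [AddCommGroup V] [Module ℚ V]

/-- The roots of the untwisted affine Kac–Moody algebra built from the finite root
system `R`: elements of `V × ℤ`, a pair `(γ, k)` representing `γ + kδ`; the real
roots are `{γ + kδ : γ ∈ Φ̊}` and the imaginary roots are `{kδ : k ≠ 0}`. -/
def affRoots (R : FinRootSystem V) : Set (V × ℤ) :=
  {p | p.1 ∈ R.roots} ∪ {p | p.1 = 0 ∧ p.2 ≠ 0}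

/-- The simple roots of the untwisted affine algebra: `α₀ = δ - θ = (-θ, 1)` and the
simple roots `(a i, 0)` of the finite system. -/
def affSimple (R : FinRootSystem V) {ℓ : ℕ} (Bs : RSBase R ℓ) :
    Fin (ℓ + 1) → V × ℤ :=
  Fin.cases (-Bs.θ, 1) (fun i => (Bs.a i, 0))

/-!
Only the finite parts of the roots matter: a pair `(x, m)` with `x ≠ 0` is an affine root iff `x`
is a root of `Φ̊`. For `i ≠ j` the finite parts `α, α'` of `α_i, α_j` are linearly independent roots
whose difference is not a root, except when `Φ̊ = {±α}` and `α' = -α`, where everything is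
immediate. The rest is a computation with Cartan integers in `Φ̊`. Since `B` is only known to be
positive on roots, the bound `⟨a, b^∨⟩ ⟨b, a^∨⟩ ≤ 3` for independent roots comes from finiteness:
otherwise `s_a` and `s_b` generate an infinite orbit of roots. It follows that `a - b` is a root
when `B(a, b) > 0` and that root strings have no gaps. If `γ` and `γ - 2α` are roots then
`⟨α, γ^∨⟩ = 1` and `|γ|² = n |α|²` with `n ≤ 3`; comparing the Cartan integers among `α`, `α'`,
`γ`, `γ - α`, `γ - 2α` and `γ - 2α' - α` leaves no room for `γ - 2α'` or `γ - 2α' - α` to be a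
root.
-/

lemma int_eq_of_cast_mul_eq {A : ℚ} (hA : 0 < A) {x y : ℤ} (h : (x : ℚ) * A = y * A) : x = y := by
  exact_mod_cast (mul_left_inj' hA.ne').mp h

namespace FinRootSystem

variable (R : FinRootSystem V) {a b : V}

lemma ne_zero_of_mem (ha : a ∈ R.roots) : a ≠ 0 := fun h => R.zero_not_mem (h ▸ ha)

lemma neg_mem_iff : -a ∈ R.roots ↔ a ∈ R.roots :=
  ⟨fun h => neg_neg a ▸ R.neg_mem _ h, R.neg_mem a⟩

lemma nsmul_notMem (ha : a ∈ R.roots) {n : ℕ} (hn : 2 ≤ n) : n • a ∉ R.roots := by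
  intro h
  rw [← Nat.cast_smul_eq_nsmul ℚ] at h
  have : (2 : ℚ) ≤ n := by exact_mod_cast hn
  rcases R.reduced a ha n h with h1 | h1 <;> linarith

lemma sub_two_nsmul_ne_zero (ha : a ∈ R.roots) (hb : b ∈ R.roots) : b - 2 • a ≠ 0 :=
  fun h => R.nsmul_notMem ha le_rfl (sub_eq_zero.mp h ▸ hb)

lemma exists_two_mul_B_eq (ha : a ∈ R.roots) (hb : b ∈ R.roots) :
    ∃ n : ℤ, 2 * R.B b a = n * R.B a a := by
  obtain ⟨n, hn⟩ := R.crys a ha b hb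
  exact ⟨n, by rwa [div_eq_iff (R.pos a ha).ne'] at hn⟩

lemma sub_smul_mem (ha : a ∈ R.roots) (hb : b ∈ R.roots) {c : ℚ}
    (h : 2 * R.B b a = c * R.B a a) : b - c • a ∈ R.roots := by
  have := R.reflect_mem a ha b hb
  rwa [h, mul_div_cancel_right₀ _ (R.pos a ha).ne'] at this

lemma one_le_of_two_mul_B_eq (ha : a ∈ R.roots) {n : ℤ} (hn : 2 * R.B b a = n * R.B a a)
    (hpos : 0 < R.B b a) : 1 ≤ n := by
  have : (0 : ℚ) < n := pos_of_mul_pos_left (by linarith) (R.pos a ha).le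
  exact_mod_cast this

lemma linearIndependent_of_ne (ha : a ∈ R.roots) (hb : b ∈ R.roots) (h₁ : b ≠ a)
    (h₂ : b ≠ -a) : LinearIndependent ℚ ![a, b] := by
  rw [LinearIndependent.pair_iff' (R.ne_zero_of_mem ha)]
  rintro c rfl
  rcases R.reduced a ha c hb with rfl | rfl
  · exact h₁ (one_smul ℚ a)
  · exact h₂ (neg_one_smul ℚ a)

/-- The roots `(s_a ∘ s_b)^m b = s • a + t • b` as coefficient pairs `(s, t)`, for reflections
`s_a`, `s_b` with `2 B(b, a) = p B(a, a)` and `2 B(a, b) = q B(b, b)`. -/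
def reflOrbitCoeff (p q : ℚ) : ℕ → ℚ × ℚ
  | 0 => (0, 1)
  | m + 1 => (p * (q * (reflOrbitCoeff p q m).1 + (reflOrbitCoeff p q m).2) -
      (reflOrbitCoeff p q m).1, -(q * (reflOrbitCoeff p q m).1 + (reflOrbitCoeff p q m).2))

lemma reflOrbitCoeff_mem (ha : a ∈ R.roots) (hb : b ∈ R.roots) {p q : ℚ}
    (hp : 2 * R.B b a = p * R.B a a) (hq : 2 * R.B a b = q * R.B b b) (m : ℕ) :
    (reflOrbitCoeff p q m).1 • a + (reflOrbitCoeff p q m).2 • b ∈ R.roots := by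
  induction m with
  | zero => simpa [reflOrbitCoeff] using hb
  | succ m ih =>
    set s := (reflOrbitCoeff p q m).1
    set t := (reflOrbitCoeff p q m).2
    have h₁ := R.sub_smul_mem hb ih (c := q * s + 2 * t) (by
      simp only [map_add, map_smul, LinearMap.add_apply, LinearMap.smul_apply, smul_eq_mul]
      linear_combination s * hq)
    have h₂ := R.sub_smul_mem ha h₁ (c := 2 * s - p * (q * s + t)) (by
      simp only [map_add, map_sub, map_smul, LinearMap.add_apply, LinearMap.sub_apply,
        LinearMap.smul_apply, smul_eq_mul]
      linear_combination (-(q * s + t)) * hp)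
    convert h₂ using 1
    simp only [reflOrbitCoeff, s, t]
    module

lemma reflOrbitCoeff_fst_strictMono {p q : ℚ} (hp : 0 < p) (hpq : 4 ≤ p * q) :
    StrictMono fun m => (reflOrbitCoeff p q m).1 := by
  have hrec : ∀ m, (reflOrbitCoeff p q (m + 2)).1 =
      (p * q - 2) * (reflOrbitCoeff p q (m + 1)).1 - (reflOrbitCoeff p q m).1 := by
    intro m
    simp only [reflOrbitCoeff]
    ring
  have hstep : ∀ m, 0 ≤ (reflOrbitCoeff p q m).1 ∧
      (reflOrbitCoeff p q m).1 < (reflOrbitCoeff p q (m + 1)).1 := by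
    intro m
    induction m with
    | zero => simp [reflOrbitCoeff, hp]
    | succ m ih =>
      refine ⟨ih.1.trans ih.2.le, ?_⟩
      rw [hrec]
      nlinarith [ih.1, ih.2]
  exact strictMono_nat_of_lt_succ fun m => (hstep m).2

lemma pairing_mul_le_three_of_pos (ha : a ∈ R.roots) (hb : b ∈ R.roots)
    (hab : LinearIndependent ℚ ![a, b]) {p q : ℤ} (hp : 2 * R.B b a = p * R.B a a)
    (hq : 2 * R.B a b = q * R.B b b) (hp0 : 0 < p) : p * q ≤ 3 := by
  by_contra! hpq
  have hmono := reflOrbitCoeff_fst_strictMono (p := p) (q := q) (by exact_mod_cast hp0)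
    (by exact_mod_cast hpq)
  refine R.finite.not_infinite (Set.infinite_of_injective_forall_mem (fun m n h => ?_)
    (R.reflOrbitCoeff_mem ha hb hp hq))
  exact hmono.injective (hab.eq_of_pair h).1

theorem pairing_mul_le_three (ha : a ∈ R.roots) (hb : b ∈ R.roots)
    (hab : LinearIndependent ℚ ![a, b]) {p q : ℤ} (hp : 2 * R.B b a = p * R.B a a)
    (hq : 2 * R.B a b = q * R.B b b) : p * q ≤ 3 := by
  have hpq : (p : ℚ) * R.B a a = q * R.B b b := by rw [← hp, ← hq, R.symm]
  rcases lt_trichotomy p 0 with hp0 | rfl | hp0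
  · have := R.pairing_mul_le_three_of_pos ha (R.neg_mem b hb)
      (LinearIndependent.pair_neg_right_iff.mpr hab) (p := -p) (q := -q)
      (by simp only [map_neg, LinearMap.neg_apply, Int.cast_neg]; linarith)
      (by simp only [map_neg, LinearMap.neg_apply, Int.cast_neg]; linarith) (by omega)
    linarith [neg_mul_neg p q]
  · simp
  · exact R.pairing_mul_le_three_of_pos ha hb hab hp hq hp0

theorem sub_mem_of_B_pos (ha : a ∈ R.roots) (hb : b ∈ R.roots)
    (hab : LinearIndependent ℚ ![a, b]) (hpos : 0 < R.B a b) : a - b ∈ R.roots := by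
  obtain ⟨p, hp⟩ := R.exists_two_mul_B_eq ha hb
  obtain ⟨q, hq⟩ := R.exists_two_mul_B_eq hb ha
  have hp1 := R.one_le_of_two_mul_B_eq ha hp (by rwa [R.symm])
  have hq1 := R.one_le_of_two_mul_B_eq hb hq hpos
  have hpq := R.pairing_mul_le_three ha hb hab hp hq
  obtain rfl | rfl : p = 1 ∨ q = 1 := by
    by_contra! h
    nlinarith [lt_of_le_of_ne hp1 h.1.symm, lt_of_le_of_ne hq1 h.2.symm]
  · rw [← neg_sub]
    exact R.neg_mem _ (by simpa using R.sub_smul_mem ha hb (c := 1) (by simpa using hp))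
  · simpa using R.sub_smul_mem hb ha (c := 1) (by simpa using hq)

theorem add_mem_of_B_neg (ha : a ∈ R.roots) (hb : b ∈ R.roots)
    (hab : LinearIndependent ℚ ![a, b]) (hneg : R.B a b < 0) : a + b ∈ R.roots := by
  simpa using R.sub_mem_of_B_pos ha (R.neg_mem b hb)
    (LinearIndependent.pair_neg_right_iff.mpr hab) (by simpa using hneg)

theorem sub_mem_of_sub_two_nsmul_mem (ha : a ∈ R.roots) (hb : b ∈ R.roots)
    (hab : LinearIndependent ℚ ![a, b]) (h : a - 2 • b ∈ R.roots) : a - b ∈ R.roots := by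
  by_cases hpos : 0 < R.B a b
  · exact R.sub_mem_of_B_pos ha hb hab hpos
  · have hind : LinearIndependent ℚ ![a - 2 • b, b] := by
      simpa [sub_eq_add_neg, ← ofNat_smul_eq_nsmul ℚ, ← neg_smul] using hab
    have := R.add_mem_of_B_neg h hb hind (by simp; linarith [R.pos b hb])
    rwa [show a - 2 • b + b = a - b by module] at this

variable {α α' γ : V}

lemma linearIndependent_of_sub_two_nsmul_mem (hγ : γ ∈ R.roots) (hα : α ∈ R.roots)
    (hσ : γ - 2 • α ∈ R.roots) (hne : γ ≠ α) : LinearIndependent ℚ ![γ, α] := by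
  refine LinearIndependent.pair_symm_iff.mp (R.linearIndependent_of_ne hα hγ hne ?_)
  rintro rfl
  refine R.nsmul_notMem hα (n := 3) (by norm_num) (R.neg_mem_iff.mp ?_)
  rwa [show -α - 2 • α = -(3 • α) by module] at hσ

theorem sub_mem_of_sub_two_nsmul_mem_of_ne (hγ : γ ∈ R.roots) (hα : α ∈ R.roots)
    (hσ : γ - 2 • α ∈ R.roots) (hne : γ ≠ α) : γ - α ∈ R.roots :=
  R.sub_mem_of_sub_two_nsmul_mem hγ hα (R.linearIndependent_of_sub_two_nsmul_mem hγ hα hσ hne) hσ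

theorem two_mul_B_eq_of_sub_two_nsmul_mem (hγ : γ ∈ R.roots) (hα : α ∈ R.roots)
    (hσ : γ - 2 • α ∈ R.roots) (hne : γ ≠ α) :
    2 * R.B γ α = R.B γ γ ∧ ∃ n : ℤ, 1 ≤ n ∧ n ≤ 3 ∧ R.B γ γ = n * R.B α α := by
  have hind := R.linearIndependent_of_sub_two_nsmul_mem hγ hα hσ hne
  have hs : R.B α γ = R.B γ α := R.symm α γ
  have hpos : 0 < R.B γ α := by
    by_contra! hle
    have hind' : LinearIndependent ℚ ![γ, γ - 2 • α] := by
      simpa [sub_eq_add_neg, ← ofNat_smul_eq_nsmul ℚ, ← neg_smul] using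
        (LinearIndependent.pair_add_smul_add_smul_iff (1 : ℚ) 0 1 (-2)).mpr ⟨hind, by norm_num⟩
    have := R.sub_mem_of_B_pos hγ hσ hind' (by simp; linarith [R.pos γ hγ])
    exact R.nsmul_notMem hα le_rfl (by rwa [sub_sub_cancel] at this)
  obtain ⟨m, hm⟩ := R.exists_two_mul_B_eq hγ hα
  obtain ⟨n, hn⟩ := R.exists_two_mul_B_eq hα hγ
  have hm1 := R.one_le_of_two_mul_B_eq hγ hm (by rwa [hs])
  have hn1 := R.one_le_of_two_mul_B_eq hα hn hpos
  have hmn := R.pairing_mul_le_three hγ hα hind hm hn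
  obtain rfl : m = 1 := by
    by_contra hm1'
    obtain rfl : n = 1 := by nlinarith [lt_of_le_of_ne hm1 (Ne.symm hm1')]
    obtain ⟨k, hk⟩ := R.exists_two_mul_B_eq hσ hγ
    simp only [map_sub, map_nsmul, LinearMap.sub_apply, LinearMap.smul_apply,
      nsmul_eq_mul] at hk
    -- `⟨γ, (γ - 2α)^∨⟩ = (2 - 2m) / (1 + 2m)` is not an integer
    have hkm : 2 - 2 * m = k * (1 + 2 * m) := int_eq_of_cast_mul_eq (R.pos γ hγ) (by
      push_cast
      linear_combination hk + 2 * hm - 4 * hs + k * (2 * hm - 6 * hs - 4 * hn))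
    have : m ≤ 3 := by linarith
    interval_cases m <;> omega
  refine ⟨by push_cast at hm; linarith, n, hn1, by linarith, ?_⟩
  push_cast at hm
  linarith

lemma B_sub_two_nsmul_self (hγα : 2 * R.B γ α = R.B γ γ) :
    R.B (γ - 2 • α) (γ - 2 • α) = 4 * R.B α α - R.B γ γ := by
  simp only [map_sub, map_nsmul, LinearMap.sub_apply, LinearMap.smul_apply, nsmul_eq_mul,
    Nat.cast_ofNat]
  linear_combination -2 * hγα - 2 * R.symm α γ

lemma sub_two_nsmul_notMem_of_orthogonal (hγ : γ ∈ R.roots) (hα' : α' ∈ R.roots)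
    (hC : R.B α α' = 0) (hγα : 2 * R.B γ α = R.B γ γ) (hγα' : 2 * R.B γ α' = R.B γ γ)
    (hA : R.B α α = R.B γ γ) : γ - 2 • α ∉ R.roots := by
  intro hσ
  obtain ⟨k, hk⟩ := R.exists_two_mul_B_eq hσ hα'
  simp only [map_sub, map_nsmul, LinearMap.sub_apply, LinearMap.smul_apply,
    nsmul_eq_mul] at hk
  have hs₁ : R.B α γ = R.B γ α := R.symm α γ
  have hs₂ : R.B α' γ = R.B γ α' := R.symm α' γ
  have hs₃ : R.B α' α = R.B α α' := R.symm α' α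
  -- `⟨α', (γ - 2α)^∨⟩ = 1 / 3`
  have : (1 : ℤ) = 3 * k := int_eq_of_cast_mul_eq (R.pos γ hγ) (by
    push_cast
    linear_combination hk - 2 * hs₂ - hγα' + 4 * hs₃ + 4 * hC - 2 * k * hs₁ - 2 * k * hγα
      + 4 * k * hA)
  omega

theorem sub_two_nsmul_neg_notMem_of_roots_subset (hall : R.roots ⊆ {α, -α})
    (hα : α ∈ R.roots) (hγ : γ ∈ R.roots) (hσ : γ - 2 • α ∈ R.roots) :
    (γ - 2 • -α ∉ R.roots ∧ γ - 2 • -α ≠ 0) ∧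
      (γ - 2 • -α - α ∉ R.roots ∧ γ - 2 • -α - α ≠ 0) := by
  obtain rfl | rfl := hall hγ
  · have h3 : γ - 2 • -γ = 3 • γ := by module
    have h2 : γ - 2 • -γ - γ = 2 • γ := by module
    rw [h2, h3]
    have hα0 := R.ne_zero_of_mem hα
    exact ⟨⟨R.nsmul_notMem hα (by norm_num), by simpa [← Nat.cast_smul_eq_nsmul ℚ] using hα0⟩,
      R.nsmul_notMem hα le_rfl, by simpa [← Nat.cast_smul_eq_nsmul ℚ] using hα0⟩
  · refine absurd (R.neg_mem_iff.mp ?_) (R.nsmul_notMem hα (n := 3) (by norm_num))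
    rwa [show -α - 2 • α = -(3 • α) by module] at hσ

structure IsSimplePair (α α' : V) : Prop where
  left_mem : α ∈ R.roots
  right_mem : α' ∈ R.roots
  linearIndependent : LinearIndependent ℚ ![α, α']
  sub_notMem : α - α' ∉ R.roots

namespace IsSimplePair

variable {R}

lemma symm (h : R.IsSimplePair α α') : R.IsSimplePair α' α :=
  ⟨h.right_mem, h.left_mem, LinearIndependent.pair_symm_iff.mp h.linearIndependent,
    fun h' => h.sub_notMem (by simpa using R.neg_mem _ h')⟩

lemma B_nonpos (h : R.IsSimplePair α α') : R.B α α' ≤ 0 := by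
  by_contra! hpos
  exact h.sub_notMem (R.sub_mem_of_B_pos h.left_mem h.right_mem h.linearIndependent hpos)

lemma sub_two_nsmul_notMem (h : R.IsSimplePair α α') : α - 2 • α' ∉ R.roots := fun h' =>
  h.sub_notMem (R.sub_mem_of_sub_two_nsmul_mem h.left_mem h.right_mem h.linearIndependent h')

lemma B_eq_zero_of_pos (h : R.IsSimplePair α α') (hpos : 0 < R.B α α + 2 * R.B α α') :
    R.B α α' = 0 := by
  obtain ⟨u, hu⟩ := R.exists_two_mul_B_eq h.left_mem h.right_mem
  have hA := R.pos α h.left_mem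
  rw [R.symm] at hu
  have hu0 : (u : ℚ) ≤ 0 := nonpos_of_mul_nonpos_left (by linarith [h.B_nonpos]) hA
  have hu1 : (-1 : ℚ) < u := by nlinarith
  obtain rfl : u = 0 := by
    have : u ≤ 0 := by exact_mod_cast hu0
    have : -1 < u := by exact_mod_cast hu1
    omega
  simpa using hu

lemma pairing_eq_zero_or_neg_one (h : R.IsSimplePair α α') (hlen : R.B α' α' ≤ R.B α α)
    {u : ℤ} (hu : 2 * R.B α' α = u * R.B α α) : u = 0 ∨ u = -1 := by
  obtain ⟨u', hu'⟩ := R.exists_two_mul_B_eq h.right_mem h.left_mem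
  have huu' := R.pairing_mul_le_three h.left_mem h.right_mem h.linearIndependent hu hu'
  have hA' := R.pos α' h.right_mem
  have hu0 : (u : ℚ) ≤ 0 :=
    nonpos_of_mul_nonpos_left (by linarith [h.B_nonpos, R.symm α' α]) (R.pos α h.left_mem)
  have hsq : ((u * u : ℤ) : ℚ) * R.B α' α' ≤ ((u * u' : ℤ) : ℚ) * R.B α' α' := by
    push_cast
    nlinarith [R.symm α' α, mul_self_nonneg (u : ℚ)]
  have : u * u ≤ u * u' := by exact_mod_cast le_of_mul_le_mul_right hsq hA'
  have : u ≤ 0 := by exact_mod_cast hu0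
  have : -1 ≤ u := by nlinarith
  omega

lemma sub_sub_mem (h : R.IsSimplePair α α') (hγ : γ ∈ R.roots) (hσ : γ - 2 • α ∈ R.roots)
    (hγα : γ ≠ α) (hpos : R.B α α' < R.B γ α') : γ - α - α' ∈ R.roots := by
  have hφ := R.sub_mem_of_sub_two_nsmul_mem_of_ne hγ h.left_mem hσ hγα
  have hφα' : 0 < R.B (γ - α) α' := by
    simpa only [map_sub, LinearMap.sub_apply, sub_pos] using hpos
  refine R.sub_mem_of_B_pos hφ h.right_mem (R.linearIndependent_of_ne hφ h.right_mem ?_ ?_) hφα'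
  · intro e
    exact h.symm.sub_notMem (by rwa [e, show γ - α - α = γ - 2 • α by module])
  · intro e
    rw [e, map_neg] at hφα'
    linarith [R.pos _ hφ]

theorem sub_two_nsmul_right_notMem (h : R.IsSimplePair α α') (hγ : γ ∈ R.roots)
    (hσ : γ - 2 • α ∈ R.roots) : γ - 2 • α' ∉ R.roots := by
  intro hσ'
  have hγα : γ ≠ α := by rintro rfl; exact h.sub_two_nsmul_notMem hσ'
  have hγα' : γ ≠ α' := by rintro rfl; exact h.symm.sub_two_nsmul_notMem hσ
  obtain ⟨hG, n, hn1, -, hn⟩ := R.two_mul_B_eq_of_sub_two_nsmul_mem hγ h.left_mem hσ hγα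
  obtain ⟨hG', n', hn1', -, hn'⟩ := R.two_mul_B_eq_of_sub_two_nsmul_mem hγ h.right_mem hσ' hγα'
  have hs₁ : R.B α γ = R.B γ α := R.symm α γ
  have hs₂ : R.B α' γ = R.B γ α' := R.symm α' γ
  have hs₃ : R.B α' α = R.B α α' := R.symm α' α
  have hψ := h.sub_sub_mem hγ hσ hγα (by linarith [h.B_nonpos, R.pos γ hγ])
  -- `0 < |γ - α - α'|² = |α|² + |α'|² + 2 B(α, α') - |γ|²`
  have hψpos := R.pos _ hψ
  simp only [map_sub, LinearMap.sub_apply] at hψpos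
  have hn1Q : (1 : ℚ) ≤ n := by exact_mod_cast hn1
  have hn1Q' : (1 : ℚ) ≤ n' := by exact_mod_cast hn1'
  have hC : R.B α α' = 0 :=
    h.B_eq_zero_of_pos (by nlinarith [R.pos α h.left_mem, R.pos α' h.right_mem])
  obtain rfl | rfl : n = 1 ∨ n' = 1 := by
    by_contra! hne
    have h2 : (2 : ℚ) ≤ n := by exact_mod_cast lt_of_le_of_ne hn1 hne.1.symm
    have h2' : (2 : ℚ) ≤ n' := by exact_mod_cast lt_of_le_of_ne hn1' hne.2.symm
    nlinarith [R.pos α h.left_mem, R.pos α' h.right_mem]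
  · exact R.sub_two_nsmul_notMem_of_orthogonal hγ h.right_mem hC hG hG'
      (by simpa using hn.symm) hσ
  · exact R.sub_two_nsmul_notMem_of_orthogonal hγ h.left_mem (by rwa [R.symm]) hG' hG
      (by simpa using hn'.symm) hσ'

theorem sub_two_nsmul_right_sub_ne_zero (h : R.IsSimplePair α α') (hσ : γ - 2 • α ∈ R.roots) :
    γ - 2 • α' - α ≠ 0 := by
  intro e
  refine h.sub_two_nsmul_notMem (R.neg_mem_iff.mp ?_)
  rwa [show -(α - 2 • α') = γ - 2 • α by linear_combination (norm := module) -e]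

lemma two_mul_B_eq_of_sub_two_nsmul_right_sub_mem (h : R.IsSimplePair α α')
    (hγ : γ ∈ R.roots) (hσ : γ - 2 • α ∈ R.roots) (hρ : γ - 2 • α' - α ∈ R.roots) :
    2 * R.B γ α = R.B γ γ ∧ 2 * R.B γ α' = R.B α α + 2 * R.B α α' ∧
      (∃ n : ℤ, 1 ≤ n ∧ n ≤ 3 ∧ R.B γ γ = n * R.B α α) ∧
      ∃ m : ℤ, 1 ≤ m ∧ R.B α α = m * R.B α' α' := by
  have hγα : γ ≠ α := by
    rintro rfl
    exact R.nsmul_notMem h.right_mem le_rfl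
      (R.neg_mem_iff.mp (by rwa [sub_sub_cancel_left] at hρ))
  obtain ⟨hG, hn⟩ := R.two_mul_B_eq_of_sub_two_nsmul_mem hγ h.left_mem hσ hγα
  have hφ := R.sub_mem_of_sub_two_nsmul_mem_of_ne hγ h.left_mem hσ hγα
  have hφα' : γ - α ≠ α' := by
    intro e
    exact h.symm.sub_notMem (by rwa [← e, show γ - α - α = γ - 2 • α by module])
  obtain ⟨hGφ, m, hm1, -, hm⟩ := R.two_mul_B_eq_of_sub_two_nsmul_mem hφ h.right_mem
    (by rwa [show γ - α - 2 • α' = γ - 2 • α' - α by abel]) hφα'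
  have hφφ : R.B (γ - α) (γ - α) = R.B α α := by
    simp only [map_sub, LinearMap.sub_apply]
    linarith [R.symm α γ]
  rw [hφφ] at hGφ hm
  simp only [map_sub, LinearMap.sub_apply] at hGφ
  exact ⟨hG, by linarith, hn, m, hm1, hm⟩

lemma two_mul_B_eq_neg_of_sub_two_nsmul_right_sub_mem (h : R.IsSimplePair α α')
    (hγ : γ ∈ R.roots) (hσ : γ - 2 • α ∈ R.roots) (hρ : γ - 2 • α' - α ∈ R.roots) :
    2 * R.B α α' = -R.B α α := by
  obtain ⟨hG, hBγα', ⟨n, hn1, hn3, hn⟩, m, hm1, hm⟩ :=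
    h.two_mul_B_eq_of_sub_two_nsmul_right_sub_mem hγ hσ hρ
  have hA := R.pos α h.left_mem
  have hs₂ : R.B α' γ = R.B γ α' := R.symm α' γ
  have hs₃ : R.B α' α = R.B α α' := R.symm α' α
  obtain ⟨u, hu⟩ := R.exists_two_mul_B_eq h.left_mem h.right_mem
  have hu01 := h.pairing_eq_zero_or_neg_one
    (by nlinarith [R.pos α' h.right_mem, (by exact_mod_cast hm1 : (1 : ℚ) ≤ m)]) hu
  obtain ⟨w, hw⟩ := R.exists_two_mul_B_eq hγ h.right_mem
  obtain ⟨z, hz⟩ := R.exists_two_mul_B_eq hσ h.right_mem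
  rw [R.B_sub_two_nsmul_self hG] at hz
  simp only [map_sub, map_nsmul, nsmul_eq_mul, Nat.cast_ofNat] at hz
  have hwn : 1 + u = w * n := int_eq_of_cast_mul_eq hA (by
    push_cast
    linear_combination -hBγα' - 2 * hs₂ + hw + w * hn - hu + 2 * hs₃)
  have hzn : 1 - u = z * (4 - n) := int_eq_of_cast_mul_eq hA (by
    push_cast
    linear_combination hz - 2 * hs₂ - hBγα' + 2 * hs₃ + hu - z * hn)
  obtain rfl : u = -1 := by
    interval_cases n <;> rcases hu01 with rfl | rfl <;> omega
  push_cast at hu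
  linarith

lemma B_eq_of_sub_two_nsmul_right_sub_mem (h : R.IsSimplePair α α')
    (hγ : γ ∈ R.roots) (hσ : γ - 2 • α ∈ R.roots) (hρ : γ - 2 • α' - α ∈ R.roots) :
    R.B γ γ = 2 * R.B α α ∧ R.B α' α' = R.B α α := by
  obtain ⟨hG, hBγα', ⟨n, hn1, hn3, hn⟩, m, hm1, hm⟩ :=
    h.two_mul_B_eq_of_sub_two_nsmul_right_sub_mem hγ hσ hρ
  have hC := h.two_mul_B_eq_neg_of_sub_two_nsmul_right_sub_mem hγ hσ hρ
  have hA := R.pos α h.left_mem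
  have hA' := R.pos α' h.right_mem
  have hBσα' : 2 * R.B (γ - 2 • α) α' = 2 * R.B α α := by
    simp only [map_sub, map_nsmul, LinearMap.sub_apply, LinearMap.smul_apply, nsmul_eq_mul,
      Nat.cast_ofNat]
    linarith
  obtain ⟨z, hz⟩ := R.exists_two_mul_B_eq hσ h.right_mem
  obtain ⟨z', hz'⟩ := R.exists_two_mul_B_eq h.right_mem hσ
  have hzn : 2 = z * (4 - n) := int_eq_of_cast_mul_eq hA (by
    rw [R.B_sub_two_nsmul_self hG, R.symm] at hz
    push_cast
    linear_combination hz - hBσα' - z * hn)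
  have hz'm : z' = 2 * m := int_eq_of_cast_mul_eq hA' (by
    push_cast
    linear_combination -hz' + hBσα' + 2 * hm)
  have hindσ : LinearIndependent ℚ ![γ - 2 • α, α'] := by
    refine R.linearIndependent_of_ne hσ h.right_mem (fun e => h.sub_notMem ?_) (fun e => ?_)
    · rwa [show γ - 2 • α' - α = α - α' by linear_combination (norm := module) -e] at hρ
    · rw [e, map_neg] at hBσα'
      linarith [R.pos _ hσ]
  have hzz' := R.pairing_mul_le_three hσ h.right_mem hindσ hz hz'
  obtain ⟨rfl, rfl⟩ : m = 1 ∧ n = 2 := by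
    subst hz'm
    have hz0 : 0 < z := by nlinarith
    obtain ⟨rfl, rfl⟩ : z = 1 ∧ m = 1 := ⟨by nlinarith, by nlinarith⟩
    exact ⟨rfl, by omega⟩
  push_cast at hn hm
  exact ⟨hn, by linarith⟩

theorem sub_two_nsmul_right_sub_notMem (h : R.IsSimplePair α α') (hγ : γ ∈ R.roots)
    (hσ : γ - 2 • α ∈ R.roots) : γ - 2 • α' - α ∉ R.roots := by
  intro hρ
  obtain ⟨hG, hBγα', -, -⟩ := h.two_mul_B_eq_of_sub_two_nsmul_right_sub_mem hγ hσ hρ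
  have hC := h.two_mul_B_eq_neg_of_sub_two_nsmul_right_sub_mem hγ hσ hρ
  obtain ⟨hGA, hA'⟩ := h.B_eq_of_sub_two_nsmul_right_sub_mem hγ hσ hρ
  obtain ⟨t, ht⟩ := R.exists_two_mul_B_eq hρ h.left_mem
  simp only [map_sub, map_nsmul, LinearMap.sub_apply, LinearMap.smul_apply, nsmul_eq_mul,
    Nat.cast_ofNat] at ht
  rw [R.symm α γ, R.symm α' γ, R.symm α' α] at ht
  -- `⟨α, (γ - 2α' - α)^∨⟩ = 2 / 3`
  have : (2 : ℤ) = 3 * t := int_eq_of_cast_mul_eq (R.pos α h.left_mem) (by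
    push_cast
    linear_combination ht - hG - hGA + 2 * hC + t * (-hG - 2 * hBγα' + 4 * hA'))
  omega

end IsSimplePair

end FinRootSystem

namespace RSBase

variable {R : FinRootSystem V} {ℓ : ℕ} (Bs : RSBase R ℓ)

lemma linearCombination_injective : Function.Injective (Fintype.linearCombination ℚ Bs.a) :=
  linearIndependent_iff_injective_fintypeLinearCombination.mp Bs.indep

lemma coeff_eq_of_sum_eq_smul {c : Fin ℓ → ℕ} {r : Fin ℓ} {x : ℚ}
    (h : ∑ i, (c i : ℚ) • Bs.a i = x • Bs.a r) : (c r : ℚ) = x := by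
  have := Bs.linearCombination_injective (a₁ := fun i => (c i : ℚ)) (a₂ := Pi.single r x)
    (by rwa [Fintype.linearCombination_apply, Fintype.linearCombination_apply_single])
  simpa using congrFun this r

lemma θ_add_a_notMem (r : Fin ℓ) : Bs.θ + Bs.a r ∉ R.roots := by
  intro h
  obtain ⟨c, hc⟩ := Bs.θ_highest _ h
  have := Bs.coeff_eq_of_sum_eq_smul (x := -1) (by rw [← hc]; module)
  linarith [(c r).cast_nonneg (α := ℚ)]

lemma θ_ne_neg_a (r : Fin ℓ) : Bs.θ ≠ -Bs.a r := by
  intro h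
  obtain ⟨c, hc⟩ := Bs.θ_highest _ (Bs.mem r)
  have := Bs.coeff_eq_of_sum_eq_smul (x := -2) (by rw [← hc, h]; module)
  linarith [(c r).cast_nonneg (α := ℚ)]

lemma a_sub_a_notMem {s r : Fin ℓ} (hsr : s ≠ r) : Bs.a s - Bs.a r ∉ R.roots := by
  intro h
  obtain ⟨c, hc⟩ | ⟨c, hc⟩ := Bs.decomp _ h
  · have := Bs.linearCombination_injective (a₁ := fun i => (c i : ℚ))
      (a₂ := Pi.single s 1 - Pi.single r 1) (by
        rw [map_sub, Fintype.linearCombination_apply_single,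
          Fintype.linearCombination_apply_single, one_smul, one_smul,
          Fintype.linearCombination_apply, hc])
    have := congrFun this r
    simp [hsr.symm] at this
    linarith [(c r).cast_nonneg (α := ℚ)]
  · have := Bs.linearCombination_injective (a₁ := fun i => (c i : ℚ))
      (a₂ := Pi.single r 1 - Pi.single s 1) (by
        rw [map_sub, Fintype.linearCombination_apply_single,
          Fintype.linearCombination_apply_single, one_smul, one_smul,
          Fintype.linearCombination_apply, ← neg_sub, hc, neg_neg])
    have := congrFun this s
    simp [hsr] at this
    linarith [(c s).cast_nonneg (α := ℚ)]

lemma a_ne_neg_a (s r : Fin ℓ) : Bs.a s ≠ -Bs.a r := by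
  intro h
  have := Bs.linearCombination_injective (a₁ := Pi.single s 1 + Pi.single r 1) (a₂ := 0) (by
    simp only [map_add, map_zero, Fintype.linearCombination_apply_single, one_smul, h,
      neg_add_cancel])
  have := congrFun this s
  by_cases hsr : s = r
  · subst hsr
    norm_num at this
  · simp [hsr] at this

lemma roots_subset_of_θ_eq {r : Fin ℓ} (hθ : Bs.θ = Bs.a r) :
    R.roots ⊆ {Bs.a r, -Bs.a r} := by
  intro x hx
  obtain ⟨c, hc⟩ := Bs.θ_highest x hx
  obtain ⟨d, hd⟩ := Bs.θ_highest (-x) (R.neg_mem x hx)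
  have hcd := Bs.linearCombination_injective (a₁ := fun i => (c i + d i : ℚ))
    (a₂ := Pi.single r 2) (by
      rw [Fintype.linearCombination_apply_single, Fintype.linearCombination_apply]
      simp only [add_smul, Finset.sum_add_distrib, ← hc, ← hd, hθ]
      module)
  have hc0 : (fun i => (c i : ℚ)) = Pi.single r (c r : ℚ) := by
    funext i
    by_cases hi : i = r
    · subst hi; simp
    · have := congrFun hcd i
      simp only [Pi.single_apply, hi, if_false] at this ⊢
      linarith [(c i).cast_nonneg (α := ℚ), (d i).cast_nonneg (α := ℚ)]
  have hxr : x = (1 - (c r : ℚ)) • Bs.a r := by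
    have := congrArg (Fintype.linearCombination ℚ Bs.a) hc0
    rw [Fintype.linearCombination_apply, Fintype.linearCombination_apply_single, ← hc, hθ] at this
    linear_combination (norm := module) -this
  rcases R.reduced _ (Bs.mem r) _ (hxr ▸ hx) with h1 | h1
  · exact Or.inl (by rw [hxr, h1, one_smul])
  · exact Or.inr (by rw [hxr, h1, neg_one_smul]; rfl)

lemma isSimplePair_neg_θ_or (r : Fin ℓ) :
    R.IsSimplePair (-Bs.θ) (Bs.a r) ∨
      Bs.θ = Bs.a r ∧ R.roots ⊆ {Bs.a r, -Bs.a r} := by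
  by_cases hθ : Bs.θ = Bs.a r
  · exact Or.inr ⟨hθ, Bs.roots_subset_of_θ_eq hθ⟩
  refine Or.inl ⟨R.neg_mem _ Bs.θ_mem, Bs.mem r,
    R.linearIndependent_of_ne (R.neg_mem _ Bs.θ_mem) (Bs.mem r) ?_ (by rwa [neg_neg, ne_comm]),
    ?_⟩
  · exact fun h => Bs.θ_ne_neg_a r (by rw [h, neg_neg])
  · rw [← neg_add', R.neg_mem_iff]
    exact Bs.θ_add_a_notMem r

end RSBase

section Affine

variable (R : FinRootSystem V) {ℓ : ℕ} (Bs : RSBase R ℓ)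

lemma affSimple_fst_mem (i : Fin (ℓ + 1)) : (affSimple R Bs i).1 ∈ R.roots := by
  cases i using Fin.cases with
  | zero => exact R.neg_mem _ Bs.θ_mem
  | succ s => exact Bs.mem s

lemma affSimple_fst_isSimplePair_or {i j : Fin (ℓ + 1)} (hij : i ≠ j) :
    R.IsSimplePair (affSimple R Bs i).1 (affSimple R Bs j).1 ∨
      (affSimple R Bs j).1 = -(affSimple R Bs i).1 ∧
        R.roots ⊆ {(affSimple R Bs i).1, -(affSimple R Bs i).1} := by
  cases i using Fin.cases with
  | zero =>
    cases j using Fin.cases with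
    | zero => exact absurd rfl hij
    | succ r =>
      refine (Bs.isSimplePair_neg_θ_or r).imp id fun ⟨hθ, hall⟩ => ⟨?_, ?_⟩
      · simp [affSimple, hθ]
      · simpa [affSimple, hθ, Set.pair_comm] using hall
  | succ s =>
    cases j using Fin.cases with
    | zero =>
      refine (Bs.isSimplePair_neg_θ_or s).imp FinRootSystem.IsSimplePair.symm
        fun ⟨hθ, hall⟩ => ⟨by simp [affSimple, hθ], hall⟩
    | succ r =>
      have hsr : s ≠ r := fun h => hij (h ▸ rfl)
      refine Or.inl ⟨Bs.mem s, Bs.mem r, R.linearIndependent_of_ne (Bs.mem s) (Bs.mem r)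
        (Bs.indep.injective.ne hsr.symm) (Bs.a_ne_neg_a r s), Bs.a_sub_a_notMem hsr⟩

lemma fst_mem_of_mem_affRoots {p : V × ℤ} (hp : p ∈ affRoots R) (h : p.1 ≠ 0) :
    p.1 ∈ R.roots :=
  hp.elim id fun h' => absurd h'.1 h

lemma notMem_affRoots_and_ne_zero {p : V × ℤ} (h₁ : p.1 ∉ R.roots) (h₂ : p.1 ≠ 0) :
    p ∉ affRoots R ∧ p ≠ 0 :=
  ⟨fun hp => h₂ (by_contra fun h => h₁ (fst_mem_of_mem_affRoots R hp h)),
    fun hp => h₂ (by rw [hp, Prod.fst_zero])⟩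

end Affine

theorem affine_beta_two_alpha_unique_general (R : FinRootSystem V) {ℓ : ℕ} (Bs : RSBase R ℓ)
    (γ : V) (hγ : γ ∈ R.roots) (k : ℕ)
    (i : Fin (ℓ + 1))
    (hi : ((γ, (k : ℤ)) - 2 • affSimple R Bs i) ∈ affRoots R) :
    ∀ j : Fin (ℓ + 1), j ≠ i →
      (((γ, (k : ℤ)) - 2 • affSimple R Bs j) ∉ affRoots R ∧
        ((γ, (k : ℤ)) - 2 • affSimple R Bs j) ≠ 0) ∧
      (((γ, (k : ℤ)) - 2 • affSimple R Bs j - affSimple R Bs i) ∉ affRoots R ∧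
        ((γ, (k : ℤ)) - 2 • affSimple R Bs j - affSimple R Bs i) ≠ 0) := by
  intro j hji
  have hα := affSimple_fst_mem R Bs i
  have hσ : γ - 2 • (affSimple R Bs i).1 ∈ R.roots :=
    fst_mem_of_mem_affRoots R hi (R.sub_two_nsmul_ne_zero hα hγ)
  suffices h : (γ - 2 • (affSimple R Bs j).1 ∉ R.roots ∧ γ - 2 • (affSimple R Bs j).1 ≠ 0) ∧
      (γ - 2 • (affSimple R Bs j).1 - (affSimple R Bs i).1 ∉ R.roots ∧
        γ - 2 • (affSimple R Bs j).1 - (affSimple R Bs i).1 ≠ 0) from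
    ⟨notMem_affRoots_and_ne_zero R h.1.1 h.1.2, notMem_affRoots_and_ne_zero R h.2.1 h.2.2⟩
  rcases affSimple_fst_isSimplePair_or R Bs hji.symm with h | ⟨hneg, hall⟩
  · exact ⟨⟨h.sub_two_nsmul_right_notMem hγ hσ, R.sub_two_nsmul_ne_zero h.right_mem hγ⟩,
      h.sub_two_nsmul_right_sub_notMem hγ hσ, h.sub_two_nsmul_right_sub_ne_zero hσ⟩
  · rw [hneg]
    exact R.sub_two_nsmul_neg_notMem_of_roots_subset hall hα hγ hσ

/-- Let `𝔤` be an (untwisted) affine Kac–Moody algebra and let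
`β = γ + kδ` be a real positive root (`γ ∈ Φ̊`, `k ≥ 0`).  If `β - 2α_i` is a root
for some simple root `α_i` of `𝔤`, then for any `j ≠ i` neither `β - 2α_j` nor
`β - 2α_j - α_i` is a root or zero. -/
theorem affine_beta_two_alpha_unique (R : FinRootSystem V) {ℓ : ℕ} (Bs : RSBase R ℓ)
    (γ : V) (hγ : γ ∈ R.roots) (k : ℕ)
    (hβpos : 0 < k ∨ ∃ c : Fin ℓ → ℕ, γ = ∑ i, (c i : ℚ) • Bs.a i)
    (i : Fin (ℓ + 1))
    (hi : ((γ, (k : ℤ)) - 2 • affSimple R Bs i) ∈ affRoots R) :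
    ∀ j : Fin (ℓ + 1), j ≠ i →
      (((γ, (k : ℤ)) - 2 • affSimple R Bs j) ∉ affRoots R ∧
        ((γ, (k : ℤ)) - 2 • affSimple R Bs j) ≠ 0) ∧
      (((γ, (k : ℤ)) - 2 • affSimple R Bs j - affSimple R Bs i) ∉ affRoots R ∧
        ((γ, (k : ℤ)) - 2 • affSimple R Bs j - affSimple R Bs i) ≠ 0) :=
  affine_beta_two_alpha_unique_general R Bs γ hγ k i hi
end

section
/- Let (λ, μ, β) be a Wahl triple in an affine Kac–Moody algebra 𝔤 with β a real root and suppose μ(β^∨) = 1. Then for every simple root α_i with n := λ(α_i^∨) + 1, the weight space V(μ)_{μ − β + nα_i} is zero. Consequently e_i^{λ(α_i^∨)+1} annihilates any vector of weight μ−β in V(μ). -/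
/-!
Since `μ(β^∨) = 1`, the weight `μ - β = s_β μ` has the same norm as `μ`. Moving up the
`α_i`-string, `(μ - β + nα_i | μ - β + nα_i) = (μ|μ) + n(2(μ - β|α_i) + n(α_i|α_i))`, and (P1)
gives `2(μ - β|α_i) ≥ -2(λ|α_i) = -λ(α_i^∨)(α_i|α_i)`; so for `n = λ(α_i^∨) + 1` the norm
strictly exceeds `(μ|μ)`, and Kac's bound forbids that weight. The operator `e_i^n` maps
`V(μ)_{μ-β}` into that weight space.
-/

section BilinearForm

variable {R P : Type*} [CommRing R] [AddCommGroup P] [Module R P]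
  (B : P →ₗ[R] P →ₗ[R] R) (hsym : ∀ x y, B x y = B y x)
include hsym

theorem apply_add_smul_self (x y : P) (c : R) :
    B (x + c • y) (x + c • y) = B x x + c * (2 * B x y + c * B y y) := by
  simp only [map_add, map_smul, LinearMap.add_apply, LinearMap.smul_apply, smul_eq_mul]
  rw [hsym y x]
  ring

theorem apply_sub_self_of_two_mul_eq {x y : P} (h : 2 * B x y = B y y) :
    B (x - y) (x - y) = B x x := by
  simpa [sub_eq_add_neg, ← h] using apply_add_smul_self B hsym x y (-1)

variable [LinearOrder R] [IsStrictOrderedRing R]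

theorem apply_self_lt_apply_add_smul_self {x y : P} {c : R} (hc : 0 < c)
    (h : 0 < 2 * B x y + c * B y y) : B x x < B (x + c • y) (x + c • y) := by
  rw [apply_add_smul_self B hsym]
  exact lt_add_of_pos_right _ (mul_pos hc h)

theorem apply_self_lt_apply_sub_add_smul_self {lam mu beta a : P} {m : ℕ}
    (ha : 0 < B a a) (hlam : 2 * B lam a = m * B a a) (hP1 : 0 ≤ B (lam + mu - beta) a)
    (hmubeta : 2 * B mu beta = B beta beta) :
    B mu mu < B (mu - beta + ((m + 1 : ℕ) : R) • a) (mu - beta + ((m + 1 : ℕ) : R) • a) := by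
  have hsplit : B (lam + mu - beta) a = B lam a + B (mu - beta) a := by
    rw [add_sub_assoc, map_add, LinearMap.add_apply]
  have hpos : 0 < 2 * B (mu - beta) a + ((m + 1 : ℕ) : R) * B a a := by
    push_cast
    linarith
  calc B mu mu = B (mu - beta) (mu - beta) := (apply_sub_self_of_two_mul_eq B hsym hmubeta).symm
    _ < _ := apply_self_lt_apply_add_smul_self B hsym (by positivity) hpos

end BilinearForm

theorem pow_apply_mem_of_forall_apply_mem {R P M : Type*} [Semiring R] [AddMonoid P]
    [AddCommMonoid M] [Module R M] (W : P → Submodule R M) (f : M →ₗ[R] M) (a : P)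
    (hf : ∀ ν, ∀ v ∈ W ν, f v ∈ W (ν + a)) {ν : P} {v : M} (hv : v ∈ W ν) (k : ℕ) :
    (f ^ k) v ∈ W (ν + k • a) := by
  induction k with
  | zero => simpa using hv
  | succ k ih =>
    rw [pow_succ', Module.End.mul_apply, succ_nsmul, ← add_assoc]
    exact hf _ _ ih

theorem wahl_mu_beta_one_weight_space_vanishes_general
    {ι P : Type} [AddCommGroup P] [Module ℚ P]
    (B : P →ₗ[ℚ] P →ₗ[ℚ] ℚ) (hsym : ∀ x y, B x y = B y x)
    (α : ι → P) (hα : ∀ i, 0 < B (α i) (α i))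
    (lam mu beta : P) (hβreal : B beta beta ≠ 0)
    (nlam : ι → ℕ)
    (hlam : ∀ i, 2 * B lam (α i) / B (α i) (α i) = nlam i)
    (hP1 : ∀ i, 0 ≤ B (lam + mu - beta) (α i))
    (hmubeta : 2 * B mu beta / B beta beta = 1)
    {M : Type} [AddCommGroup M] [Module ℂ M]
    (W : P → Submodule ℂ M)
    (E : ι → M →ₗ[ℂ] M)
    (hE : ∀ (i : ι) (ν : P), ∀ v ∈ W ν, E i v ∈ W (ν + α i))
    (hKac : ∀ ν : P, W ν ≠ ⊥ → B ν ν ≤ B mu mu) :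
    (∀ i : ι, W (mu - beta + ((nlam i + 1 : ℕ) : ℚ) • α i) = ⊥) ∧
    (∀ i : ι, ∀ v ∈ W (mu - beta), ((E i) ^ (nlam i + 1)) v = 0) := by
  have vanish : ∀ i, W (mu - beta + ((nlam i + 1 : ℕ) : ℚ) • α i) = ⊥ := by
    intro i
    by_contra hne
    refine (hKac _ hne).not_gt (apply_self_lt_apply_sub_add_smul_self B hsym (hα i) ?_ (hP1 i) ?_)
    · exact (div_eq_iff (hα i).ne').mp (hlam i)
    · exact (div_eq_one_iff_eq hβreal).mp hmubeta
  refine ⟨vanish, fun i v hv => ?_⟩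
  have hmem := pow_apply_mem_of_forall_apply_mem W (E i) (α i) (hE i) hv (nlam i + 1)
  rwa [← Nat.cast_smul_eq_nsmul ℚ, vanish i, Submodule.mem_bot] at hmem

/-- Let `(λ, μ, β)` be a Wahl triple in an affine Kac–Moody algebra
with `β` a real root (`B β β ≠ 0`) and `μ(β^∨) = 1`.  Then for every simple root
`α_i`, with `n := λ(α_i^∨) + 1`, the weight space `V(μ)_{μ-β+nα_i}` is zero; hence
`e_i^{λ(α_i^∨)+1}` annihilates any vector of weight `μ - β` in `V(μ)`.

Here the weight lattice is modelled by a rational vector space `P` with symmetric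
bilinear form `B` (the normalized invariant form), coroot pairings are
`χ(ξ^∨) = 2(χ|ξ)/(ξ|ξ)`, `V(μ)` is modelled by its family of weight spaces
`W : P → Submodule ℂ M` together with the raising operators `E i` (the actions of
the simple root vectors `e_i`), and `hKac` is Kac's bound `(μ|μ) ≥ (ν|ν)` for every
weight `ν` of `V(μ)`. -/
theorem wahl_mu_beta_one_weight_space_vanishes
    {ι P : Type} [Fintype ι] [AddCommGroup P] [Module ℚ P]
    (B : P →ₗ[ℚ] P →ₗ[ℚ] ℚ) (hsym : ∀ x y, B x y = B y x)
    (α : ι → P) (hα : ∀ i, 0 < B (α i) (α i))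
    (Φ Φpos : Set P) (hsub : Φpos ⊆ Φ)
    (lam mu beta : P) (hβ : beta ∈ Φpos) (hβreal : B beta beta ≠ 0)
    (nlam nmu : ι → ℕ)
    (hlam : ∀ i, 2 * B lam (α i) / B (α i) (α i) = nlam i)
    (hmu : ∀ i, 2 * B mu (α i) / B (α i) (α i) = nmu i)
    (hP1 : ∀ i, 0 ≤ B (lam + mu - beta) (α i))
    (hP2 : ∀ i, (nlam i = 0 ∨ nmu i = 0) → beta - α i ∉ Φ ∧ beta - α i ≠ 0)
    (hmubeta : 2 * B mu beta / B beta beta = 1)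
    {M : Type} [AddCommGroup M] [Module ℂ M]
    (W : P → Submodule ℂ M)
    (E : ι → M →ₗ[ℂ] M)
    (hE : ∀ (i : ι) (ν : P), ∀ v ∈ W ν, E i v ∈ W (ν + α i))
    (hKac : ∀ ν : P, W ν ≠ ⊥ → B ν ν ≤ B mu mu) :
    (∀ i : ι, W (mu - beta + ((nlam i + 1 : ℕ) : ℚ) • α i) = ⊥) ∧
    (∀ i : ι, ∀ v ∈ W (mu - beta), ((E i) ^ (nlam i + 1)) v = 0) :=
  wahl_mu_beta_one_weight_space_vanishes_general B hsym α hα lam mu beta hβreal nlam hlam hP1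
    hmubeta W E hE hKac
end

section
/- Let 𝔤 be an affine Kac–Moody algebra, λ, μ dominant integral weights of levels l, m > 0, and (λ, μ, β) a Wahl triple with β a real positive root. Then (1/2)[(λ|λ+2ρ)/(l+h^∨) + (μ|μ+2ρ)/(m+h^∨) − (λ+μ−β | λ+μ−β+2ρ)/(l+m+h^∨)] > 0, assuming the Cartan-component inequality (1/2)[(λ|λ+2ρ)/(l+h^∨) + (μ|μ+2ρ)/(m+h^∨) − (λ+μ|λ+μ+2ρ)/(l+m+h^∨)] ≥ 0. -/
/-!
Write `ν = λ + μ`. By symmetry of the form, `(ν - β|ν - β + 2ρ) = (ν|ν + 2ρ) - d` with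
`d = 2(ν|β) - (β|β) + 2(ρ|β) = 2(ν - β|β) + (β|β) + 2(ρ|β)`. Each summand of the last
expression is controlled: `(ν - β|β) ≥ 0` since `ν - β` is dominant (P1) and `β` is a
nonnegative combination of simple roots, `(β|β) > 0`, and `2(ρ|β) ≥ (β|β)`. So `d > 0`, and the
expression exceeds the Cartan one, which is `≥ 0`, by `d / (2(l + m + h^∨)) > 0`.
-/

theorem LinearMap.nonneg_apply_sum_nat_smul {ι P : Type*} [Fintype ι] [AddCommGroup P]
    [Module ℝ P] (f : P →ₗ[ℝ] ℝ) (α : ι → P) (hf : ∀ i, 0 ≤ f (α i)) (c : ι → ℕ) :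
    0 ≤ f (∑ i, (c i : ℝ) • α i) := by
  rw [map_sum]
  exact Finset.sum_nonneg fun i _ => by
    rw [map_smul, smul_eq_mul]
    exact mul_nonneg (Nat.cast_nonneg _) (hf i)

theorem LinearMap.apply_sub_add_two_smul_of_symm {P : Type*} [AddCommGroup P] [Module ℝ P]
    (B : P →ₗ[ℝ] P →ₗ[ℝ] ℝ) (hsym : ∀ x y, B x y = B y x) (ν β ρ : P) :
    B (ν - β) (ν - β + (2 : ℝ) • ρ)
      = B ν (ν + (2 : ℝ) • ρ) - (2 * B ν β - B β β + 2 * B ρ β) := by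
  have hβν := hsym β ν
  have hβρ := hsym β ρ
  simp only [map_add, map_sub, map_smul, LinearMap.sub_apply, smul_eq_mul]
  linarith

theorem wahl_triple_L0_positive_general
    {ι P : Type} [Fintype ι] [AddCommGroup P] [Module ℝ P]
    (B : P →ₗ[ℝ] P →ₗ[ℝ] ℝ) (hsym : ∀ x y, B x y = B y x)
    (α : ι → P)
    (lam mu beta rho : P) (l m hv : ℝ)
    (hl : 0 < l) (hm : 0 < m) (hh : 0 < hv)
    (hβpos : ∃ c : ι → ℕ, beta = ∑ i, (c i : ℝ) • α i)
    (hP1 : ∀ i, 0 ≤ B (lam + mu - beta) (α i))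
    (hreal : 0 < B beta beta)
    (hrho : B beta beta ≤ 2 * B rho beta)
    (hCartan : 0 ≤ (1 / 2) * (B lam (lam + (2 : ℝ) • rho) / (l + hv)
        + B mu (mu + (2 : ℝ) • rho) / (m + hv)
        - B (lam + mu) (lam + mu + (2 : ℝ) • rho) / (l + m + hv))) :
    0 < (1 / 2) * (B lam (lam + (2 : ℝ) • rho) / (l + hv)
        + B mu (mu + (2 : ℝ) • rho) / (m + hv)
        - B (lam + mu - beta) (lam + mu - beta + (2 : ℝ) • rho) / (l + m + hv)) := by
  obtain ⟨c, hc⟩ := hβpos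
  have hP1β : 0 ≤ B (lam + mu - beta) beta := by
    simpa only [← hc] using (B (lam + mu - beta)).nonneg_apply_sum_nat_smul α hP1 c
  have hsplit : B (lam + mu) beta = B (lam + mu - beta) beta + B beta beta := by
    simp only [map_sub, LinearMap.sub_apply]
    ring
  have hdrop : 0 < 2 * B (lam + mu) beta - B beta beta + 2 * B rho beta := by linarith
  have hdrop_div := div_pos hdrop (by linarith : 0 < l + m + hv)
  rw [B.apply_sub_add_two_smul_of_symm hsym, sub_div]
  linarith

/-- Let `𝔤` be an affine Kac–Moody algebra, `λ, μ` dominant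
integral weights of positive levels `l, m`, and `(λ, μ, β)` a Wahl triple with `β` a
real positive root.  Then
`(1/2)[(λ|λ+2ρ)/(l+h^∨) + (μ|μ+2ρ)/(m+h^∨) − (λ+μ−β|λ+μ−β+2ρ)/(l+m+h^∨)] > 0`,
assuming the Cartan-component inequality
`(1/2)[(λ|λ+2ρ)/(l+h^∨) + (μ|μ+2ρ)/(m+h^∨) − (λ+μ|λ+μ+2ρ)/(l+m+h^∨)] ≥ 0`.

The weight space `𝔥*` is modelled by a real vector space `P` with symmetric
bilinear form `B` (the normalized invariant form), simple roots `α i`; dominance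
and the Wahl conditions (P1), (P2) are expressed through `B`-pairings; `β` being a
positive real root gives `B β β > 0` and `β` a nonnegative combination of simple
roots; and `ρ(β^∨) ≥ 1` gives `(β|β) ≤ 2(ρ|β)`. -/
theorem wahl_triple_L0_positive
    {ι P : Type} [Fintype ι] [AddCommGroup P] [Module ℝ P]
    (B : P →ₗ[ℝ] P →ₗ[ℝ] ℝ) (hsym : ∀ x y, B x y = B y x)
    (α : ι → P) (Φ : Set P)
    (lam mu beta rho : P) (l m hv : ℝ)
    (hl : 0 < l) (hm : 0 < m) (hh : 0 < hv)
    (hβΦ : beta ∈ Φ)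
    (hβpos : ∃ c : ι → ℕ, beta = ∑ i, (c i : ℝ) • α i)
    (hdomlam : ∀ i, 0 ≤ B lam (α i)) (hdommu : ∀ i, 0 ≤ B mu (α i))
    (hP1 : ∀ i, 0 ≤ B (lam + mu - beta) (α i))
    (hP2 : ∀ i, (B lam (α i) = 0 ∨ B mu (α i) = 0) → beta - α i ∉ Φ ∧ beta - α i ≠ 0)
    (hreal : 0 < B beta beta)
    (hrho : B beta beta ≤ 2 * B rho beta)
    (hCartan : 0 ≤ (1 / 2) * (B lam (lam + (2 : ℝ) • rho) / (l + hv)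
        + B mu (mu + (2 : ℝ) • rho) / (m + hv)
        - B (lam + mu) (lam + mu + (2 : ℝ) • rho) / (l + m + hv))) :
    0 < (1 / 2) * (B lam (lam + (2 : ℝ) • rho) / (l + hv)
        + B mu (mu + (2 : ℝ) • rho) / (m + hv)
        - B (lam + mu - beta) (lam + mu - beta + (2 : ℝ) • rho) / (l + m + hv)) :=
  wahl_triple_L0_positive_general B hsym α lam mu beta rho l m hv hl hm hh hβpos hP1 hreal hrho
    hCartan
end
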